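/- arXiv:1611.00756 — 3 statements merged into one kernel-verified Lean document; each statement's English description precedes it below -/
import Mathlib

section
/- Let f be L₁-smooth. The function ρ(x) = L₁·(max(‖x‖ - α/L₂, 0))² is convex, and its gradient ∇ρ(x) = 2L₁·(x/‖x‖)·max(‖x‖ - α/L₂, 0) (interpreted as 0 when ‖x‖ ≤ α/L₂) is 4L₁-Lipschitz continuous. -/
/-!
Write `c = α / L₂` and `B` for the closed ball of radius `c`. Then `[‖x‖ - c]₊` is the
distance from `x` to `B`, a nonnegative convex function, so its square is convex, and
`(‖x‖ - c)₊ / ‖x‖ • x` is the residual `x - Π_B x` of the metric projection onto `B`.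
Inside `B` we have `ρ y ≤ L₁ ‖y - x‖²`, so the gradient vanishes; outside, `ρ` is locally
`L₁ (‖y‖ - c)²` and the chain rule gives `2 L₁ (x - Π_B x)`. The residual is 2-Lipschitz because
`Π_B` is nonexpansive; outside `B` this reduces to the identity
`‖x - y‖² = (‖x‖ - ‖y‖)² + (2‖x‖‖y‖ - 2⟪x, y⟫)` together with
`‖c x / ‖x‖ - c y / ‖y‖‖² = c² / (‖x‖‖y‖) · (2‖x‖‖y‖ - 2⟪x, y⟫)`.
-/

open scoped RealInnerProductSpace

section NormedSpace

variable {E : Type*} [NormedAddCommGroup E] [NormedSpace ℝ E]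

theorem convexOn_mul_max_norm_sub_sq (c : ℝ) {L : ℝ} (hL : 0 ≤ L) :
    ConvexOn ℝ Set.univ (fun x : E => L * max (‖x‖ - c) 0 ^ 2) := by
  have hd : ConvexOn ℝ Set.univ (fun x : E => max (‖x‖ - c) 0) :=
    ((convexOn_norm convex_univ).sub (concaveOn_const c convex_univ)).sup
      (convexOn_const 0 convex_univ)
  exact (hd.pow (fun x _ => le_max_right _ _) 2).smul hL

theorem hasFDerivAt_mul_max_norm_sub_sq_of_norm_le (c L : ℝ) {x : E} (hx : ‖x‖ ≤ c) :
    HasFDerivAt (fun y : E => L * max (‖y‖ - c) 0 ^ 2) (0 : E →L[ℝ] ℝ) x := by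
  refine Asymptotics.IsBigO.hasFDerivAt (n := 2) (.of_bound |L| (.of_forall fun y => ?_))
    one_lt_two
  have hd : max (‖y‖ - c) 0 ≤ ‖y - x‖ :=
    max_le (by linarith [norm_sub_norm_le y x]) (norm_nonneg _)
  rw [norm_mul, Real.norm_eq_abs, norm_pow, norm_pow, Real.norm_of_nonneg (le_max_right _ _),
    norm_norm]
  gcongr

end NormedSpace

section InnerProductSpace

variable {E : Type*} [NormedAddCommGroup E] [InnerProductSpace ℝ E]

theorem hasFDerivAt_norm_of_ne_zero {x : E} (hx : x ≠ 0) :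
    HasFDerivAt (‖·‖) (‖x‖⁻¹ • innerSL ℝ x) x := by
  have h := (hasStrictFDerivAt_norm_sq x).hasFDerivAt.sqrt (by simpa using hx)
  simp only [Real.sqrt_sq (norm_nonneg _)] at h
  convert h using 1
  ext y
  simp only [smul_apply, coe_innerSL_apply, smul_eq_mul, one_div, mul_inv_rev, nsmul_eq_mul,
    Nat.cast_ofNat]
  field_simp

noncomputable def ballResidual (c : ℝ) (x : E) : E := (max (‖x‖ - c) 0 / ‖x‖) • x

theorem ballResidual_of_norm_le {c : ℝ} {x : E} (hx : ‖x‖ ≤ c) : ballResidual c x = 0 := by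
  simp [ballResidual, max_eq_right (sub_nonpos.2 hx)]

theorem ballResidual_of_le_norm {c : ℝ} {x : E} (hx : c ≤ ‖x‖) :
    ballResidual c x = x - (c / ‖x‖) • x := by
  rcases eq_or_ne x 0 with rfl | hx0
  · simp [ballResidual]
  rw [ballResidual, max_eq_left (sub_nonneg.2 hx), sub_div, div_self (norm_ne_zero_iff.2 hx0),
    sub_smul, one_smul]

theorem norm_ballResidual {c : ℝ} (hc : 0 ≤ c) (x : E) :
    ‖ballResidual c x‖ = max (‖x‖ - c) 0 := by
  rcases le_or_gt ‖x‖ c with hx | hx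
  · rw [ballResidual_of_norm_le hx, norm_zero, max_eq_right (sub_nonpos.2 hx)]
  · have hx0 : 0 < ‖x‖ := hc.trans_lt hx
    rw [ballResidual, norm_smul, Real.norm_of_nonneg (by positivity), div_mul_cancel₀ _ hx0.ne']

theorem norm_div_norm_smul_sub_le {c : ℝ} (hc : 0 ≤ c) {x y : E} (hx : c ≤ ‖x‖) (hy : c ≤ ‖y‖) :
    ‖(c / ‖x‖) • x - (c / ‖y‖) • y‖ ≤ ‖x - y‖ := by
  rcases hc.eq_or_lt with rfl | hc
  · simp
  have ha : 0 < ‖x‖ := hc.trans_le hx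
  have hb : 0 < ‖y‖ := hc.trans_le hy
  have hgap : 0 ≤ 2 * (‖x‖ * ‖y‖) - 2 * ⟪x, y⟫ := by linarith [real_inner_le_norm x y]
  have hratio : c ^ 2 / (‖x‖ * ‖y‖) ≤ 1 :=
    (div_le_one (by positivity)).2 (by rw [sq]; exact mul_le_mul hx hy hc.le ha.le)
  have hlhs : ‖(c / ‖x‖) • x - (c / ‖y‖) • y‖ ^ 2
      = c ^ 2 / (‖x‖ * ‖y‖) * (2 * (‖x‖ * ‖y‖) - 2 * ⟪x, y⟫) := by
    rw [norm_sub_sq_real, norm_smul, norm_smul, real_inner_smul_left, real_inner_smul_right,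
      Real.norm_of_nonneg (by positivity), Real.norm_of_nonneg (by positivity)]
    field_simp
    ring
  have hrhs : ‖x - y‖ ^ 2 = (‖x‖ - ‖y‖) ^ 2 + (2 * (‖x‖ * ‖y‖) - 2 * ⟪x, y⟫) := by
    rw [norm_sub_sq_real]
    ring
  refine (pow_le_pow_iff_left₀ (norm_nonneg _) (norm_nonneg _) two_ne_zero).1 ?_
  rw [hlhs, hrhs]
  nlinarith [sq_nonneg (‖x‖ - ‖y‖)]

theorem norm_ballResidual_sub_le {c : ℝ} (hc : 0 ≤ c) (x y : E) :
    ‖ballResidual c x - ballResidual c y‖ ≤ 2 * ‖x - y‖ := by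
  wlog hxy : ‖x‖ ≤ ‖y‖ generalizing x y
  · rw [norm_sub_rev, norm_sub_rev x]
    exact this y x (le_of_not_ge hxy)
  rcases le_or_gt ‖y‖ c with hy | hy
  · simp [ballResidual_of_norm_le hy, ballResidual_of_norm_le (hxy.trans hy)]
  rcases le_or_gt ‖x‖ c with hx | hx
  · rw [ballResidual_of_norm_le hx, zero_sub, norm_neg, norm_ballResidual hc,
      max_eq_left (sub_nonneg.2 hy.le), norm_sub_rev]
    linarith [norm_sub_norm_le y x, norm_nonneg (y - x)]
  · rw [ballResidual_of_le_norm hx.le, ballResidual_of_le_norm hy.le, sub_sub_sub_comm, two_mul]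
    exact (norm_sub_le _ _).trans (add_le_add_right (norm_div_norm_smul_sub_le hc hx.le hy.le) _)

theorem hasGradientAt_mul_max_norm_sub_sq [CompleteSpace E] {c : ℝ} (hc : 0 ≤ c) (L : ℝ)
    (x : E) :
    HasGradientAt (fun y : E => L * max (‖y‖ - c) 0 ^ 2) ((2 * L) • ballResidual c x) x := by
  rw [hasGradientAt_iff_hasFDerivAt]
  rcases le_or_gt ‖x‖ c with hx | hx
  · rw [ballResidual_of_norm_le hx, smul_zero, map_zero]
    exact hasFDerivAt_mul_max_norm_sub_sq_of_norm_le c L hx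
  have hsmooth :
      (fun y : E => L * max (‖y‖ - c) 0 ^ 2) =ᶠ[nhds x] fun y => L * (‖y‖ - c) ^ 2 := by
    filter_upwards [(isOpen_lt continuous_const continuous_norm).mem_nhds hx] with y hy
    rw [max_eq_left (sub_nonneg.2 hy.le)]
  refine ((((hasFDerivAt_norm_of_ne_zero (norm_pos_iff.1 (hc.trans_lt hx))).sub_const c).pow
    2).const_mul
    L).congr_of_eventuallyEq hsmooth |>.congr_fderiv ?_
  ext y
  simp only [ballResidual, max_eq_left (sub_nonneg.2 hx.le), Nat.add_one_sub_one, pow_one,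
    nsmul_eq_mul, Nat.cast_ofNat, smul_apply, coe_innerSL_apply, smul_eq_mul,
    map_smul, InnerProductSpace.toDual_apply_apply]
  field_simp

end InnerProductSpace

/-- The function `ρ x = L₁ (max (‖x‖ - α/L₂) 0)²` is convex, its gradient is
`∇ρ x = 2 L₁ (max (‖x‖ - α/L₂) 0 / ‖x‖) • x` (interpreted as `0` when `‖x‖ ≤ α/L₂`),
and this gradient is `4 L₁`-Lipschitz. -/
theorem stmt_5 {d : ℕ} (α L₁ L₂ : ℝ) (hα : 0 ≤ α) (hL₁ : 0 < L₁) (hL₂ : 0 < L₂)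
    (ρ : EuclideanSpace ℝ (Fin d) → ℝ)
    (hρ : ∀ x, ρ x = L₁ * max (‖x‖ - α / L₂) 0 ^ 2)
    (ρ' : EuclideanSpace ℝ (Fin d) → EuclideanSpace ℝ (Fin d))
    (hρ' : ∀ x, ρ' x = (2 * L₁ * max (‖x‖ - α / L₂) 0 / ‖x‖) • x) :
    ConvexOn ℝ Set.univ ρ ∧ (∀ x, HasGradientAt ρ (ρ' x) x) ∧
      ∀ x y, ‖ρ' x - ρ' y‖ ≤ 4 * L₁ * ‖x - y‖ := by
  have hc : 0 ≤ α / L₂ := div_nonneg hα hL₂.le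
  obtain rfl : ρ = fun x => L₁ * max (‖x‖ - α / L₂) 0 ^ 2 := funext hρ
  have hρ'_eq : ∀ x, ρ' x = (2 * L₁) • ballResidual (α / L₂) x := fun x => by
    rw [hρ', ballResidual, smul_smul, mul_div_assoc]
  refine ⟨convexOn_mul_max_norm_sub_sq _ hL₁.le, fun x => ?_, fun x y => ?_⟩
  · rw [hρ'_eq]
    exact hasGradientAt_mul_max_norm_sub_sq hc L₁ x
  · rw [hρ'_eq, hρ'_eq, ← smul_sub, norm_smul, Real.norm_of_nonneg (by positivity)]
    linarith [mul_le_mul_of_nonneg_left (norm_ballResidual_sub_le hc x y)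
      (by positivity : (0 : ℝ) ≤ 2 * L₁)]
end

section
/- Let f have L₂-Lipschitz Hessian, let z ∈ ℝ^d and let v be a unit vector with ⟨v, ∇²f(z)v⟩ ≤ -α/2 for some α > 0. Set η = (2|⟨v, ∇²f(z)v⟩|/L₂)·sign(⟨v, ∇f(z)⟩) and z' = z - ηv. Then f(z') ≤ f(z) - 2|⟨v, ∇²f(z)v⟩|³/(3L₂²) ≤ f(z) - α³/(12L₂²). -/
open scoped RealInnerProductSpace
open Set

/-! A Lipschitz Hessian gives the cubic upper Taylor bound
`f (z + h) ≤ f z + ⟪∇f z, h⟫ + ⟪h, ∇²f z h⟫ / 2 + L₂ ‖h‖³ / 6`.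
For `h = -η v` the sign of `η` makes the gradient term nonpositive, and the rest is
`-|c| η² / 2 + L₂ |η|³ / 6` with `c = ⟪v, ∇²f z v⟫ < 0`; the step length `|η| = 2|c|/L₂`
minimises it, with value `-2|c|³/(3L₂²)`. -/

theorem image_le_of_deriv_le_deriv {g g' B B' : ℝ → ℝ} {a t : ℝ}
    (hg : ∀ s, HasDerivAt g (g' s) s) (hB : ∀ s, HasDerivAt B (B' s) s)
    (ha : g a ≤ B a) (hderiv : ∀ s ∈ Ico a t, g' s ≤ B' s) (hat : a ≤ t) : g t ≤ B t :=
  image_le_of_deriv_right_le_deriv_boundary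
    (fun s _ => (hg s).continuousAt.continuousWithinAt) (fun s _ => (hg s).hasDerivWithinAt)
    ha (fun s _ => (hB s).continuousAt.continuousWithinAt) (fun s _ => (hB s).hasDerivWithinAt)
    hderiv ⟨hat, le_rfl⟩

theorem image_le_of_deriv_two_sub_le {φ φ₁ φ₂ : ℝ → ℝ} {M t : ℝ}
    (h₁ : ∀ s, HasDerivAt φ (φ₁ s) s) (h₂ : ∀ s, HasDerivAt φ₁ (φ₂ s) s)
    (hφ₂ : ∀ s ∈ Icc 0 t, φ₂ s - φ₂ 0 ≤ M * s) (ht : 0 ≤ t) :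
    φ t ≤ φ 0 + t * φ₁ 0 + t ^ 2 / 2 * φ₂ 0 + M * t ^ 3 / 6 := by
  have hφ₁ : ∀ s ∈ Icc 0 t, φ₁ s ≤ φ₁ 0 + s * φ₂ 0 + M * s ^ 2 / 2 := by
    rintro s ⟨hs, hst⟩
    refine image_le_of_deriv_le_deriv h₂ (fun r => ?_) (by simp)
      (fun r hr => ?_) hs (B := fun r => φ₁ 0 + r * φ₂ 0 + M * r ^ 2 / 2)
      (B' := fun r => φ₂ 0 + M * r)
    · exact ((((hasDerivAt_id r).mul_const (φ₂ 0)).const_add (φ₁ 0)).add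
        (((hasDerivAt_pow 2 r).const_mul M).div_const 2)).congr_deriv (by push_cast; ring)
    · linarith [hφ₂ r ⟨hr.1, hr.2.le.trans hst⟩]
  refine image_le_of_deriv_le_deriv h₁ (fun r => ?_) (by simp)
    (fun r hr => hφ₁ r (Ico_subset_Icc_self hr)) ht
    (B := fun r => φ 0 + r * φ₁ 0 + r ^ 2 / 2 * φ₂ 0 + M * r ^ 3 / 6)
    (B' := fun r => φ₁ 0 + r * φ₂ 0 + M * r ^ 2 / 2)
  exact (((((hasDerivAt_id r).mul_const (φ₁ 0)).const_add (φ 0)).add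
    (((hasDerivAt_pow 2 r).div_const 2).mul_const (φ₂ 0))).add
    (((hasDerivAt_pow 3 r).const_mul M).div_const 6)).congr_deriv (by push_cast; ring)

variable {E : Type*} [NormedAddCommGroup E] [InnerProductSpace ℝ E]

theorem real_inner_apply_self_le_opNorm_mul_sq (A : E →L[ℝ] E) (h : E) :
    ⟪h, A h⟫ ≤ ‖A‖ * ‖h‖ ^ 2 :=
  calc ⟪h, A h⟫ ≤ ‖h‖ * ‖A h‖ := real_inner_le_norm _ _
    _ ≤ ‖h‖ * (‖A‖ * ‖h‖) := by gcongr; exact A.le_opNorm h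
    _ = ‖A‖ * ‖h‖ ^ 2 := by ring

theorem image_add_le_of_hessian_lipschitz [CompleteSpace E] {f : E → ℝ} {f' : E → E}
    {f'' : E → E →L[ℝ] E} {L : ℝ} (hgrad : ∀ x, HasGradientAt f (f' x) x)
    (hhess : ∀ x, HasFDerivAt f' (f'' x) x)
    (hlip : ∀ x y, ‖f'' x - f'' y‖ ≤ L * ‖x - y‖) (x h : E) :
    f (x + h) ≤ f x + ⟪f' x, h⟫ + ⟪h, f'' x h⟫ / 2 + L * ‖h‖ ^ 3 / 6 := by
  have hline (t : ℝ) : HasDerivAt (fun t : ℝ => x + t • h) h t := by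
    simpa using ((hasDerivAt_id t).smul_const h).const_add x
  have h₁ (t : ℝ) : HasDerivAt (fun t => f (x + t • h)) ⟪f' (x + t • h), h⟫ t :=
    (hgrad _).hasFDerivAt.comp_hasDerivAt t (hline t)
  have h₂ (t : ℝ) :
      HasDerivAt (fun t => ⟪f' (x + t • h), h⟫) ⟪h, f'' (x + t • h) h⟫ t := by
    have := (innerSL ℝ h).hasFDerivAt.comp_hasDerivAt t ((hhess _).comp_hasDerivAt t (hline t))
    simpa only [Function.comp_def, innerSL_apply_apply, real_inner_comm h] using this
  have hφ₂ : ∀ t ∈ Icc (0 : ℝ) 1,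
      ⟪h, f'' (x + t • h) h⟫ - ⟪h, f'' (x + (0 : ℝ) • h) h⟫ ≤ L * ‖h‖ ^ 3 * t := by
    rintro t ⟨ht, -⟩
    calc ⟪h, f'' (x + t • h) h⟫ - ⟪h, f'' (x + (0 : ℝ) • h) h⟫
        = ⟪h, (f'' (x + t • h) - f'' x) h⟫ := by simp [inner_sub_right]
      _ ≤ ‖f'' (x + t • h) - f'' x‖ * ‖h‖ ^ 2 := real_inner_apply_self_le_opNorm_mul_sq _ h
      _ ≤ L * ‖t • h‖ * ‖h‖ ^ 2 := by gcongr; simpa using hlip (x + t • h) x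
      _ = L * ‖h‖ ^ 3 * t := by rw [norm_smul, Real.norm_of_nonneg ht]; ring
  have := image_le_of_deriv_two_sub_le h₁ h₂ hφ₂ zero_le_one
  simp only [zero_smul, add_zero, one_smul, one_pow, one_mul, mul_one] at this
  linarith

theorem stmt_7_general {d : ℕ} (f : EuclideanSpace ℝ (Fin d) → ℝ)
    (f' : EuclideanSpace ℝ (Fin d) → EuclideanSpace ℝ (Fin d))
    (f'' : EuclideanSpace ℝ (Fin d) → EuclideanSpace ℝ (Fin d) →L[ℝ] EuclideanSpace ℝ (Fin d))
    (L₂ α : ℝ) (hL₂ : 0 < L₂) (hα : 0 < α)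
    (hgrad : ∀ x, HasGradientAt f (f' x) x)
    (hhess : ∀ x, HasFDerivAt f' (f'' x) x)
    (hhesslip : ∀ x y, ‖f'' x - f'' y‖ ≤ L₂ * ‖x - y‖)
    (z v : EuclideanSpace ℝ (Fin d)) (hv : ‖v‖ = 1)
    (hcurv : ⟪v, f'' z v⟫ ≤ -α / 2)
    (η : ℝ)
    (hη : η = 2 * |⟪v, f'' z v⟫| / L₂ * (if 0 ≤ ⟪v, f' z⟫ then (1 : ℝ) else -1))
    (z' : EuclideanSpace ℝ (Fin d)) (hz' : z' = z - η • v) :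
    f z' ≤ f z - 2 * |⟪v, f'' z v⟫| ^ 3 / (3 * L₂ ^ 2) ∧
      f z - 2 * |⟪v, f'' z v⟫| ^ 3 / (3 * L₂ ^ 2) ≤ f z - α ^ 3 / (12 * L₂ ^ 2) := by
  set c := ⟪v, f'' z v⟫
  have hc : c < 0 := by linarith
  have hη_abs : |η| = 2 * |c| / L₂ := by
    rw [hη, abs_mul, abs_div, abs_of_pos hL₂, abs_mul, abs_two, abs_abs]
    split_ifs <;> norm_num
  have hgrad_term : ⟪f' z, -η • v⟫ ≤ 0 := by
    rw [real_inner_smul_right, real_inner_comm, hη, neg_mul, neg_nonpos, mul_assoc]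
    have : 0 ≤ (if 0 ≤ ⟪v, f' z⟫ then (1 : ℝ) else -1) * ⟪v, f' z⟫ := by
      split_ifs <;> linarith
    positivity
  have hhess_term : ⟪-η • v, f'' z (-η • v)⟫ = -|η| ^ 2 * |c| := by
    rw [map_smul, real_inner_smul_left, real_inner_smul_right, abs_of_neg hc, sq_abs]
    ring
  have hnorm : ‖-η • v‖ = |η| := by rw [norm_smul, hv, Real.norm_eq_abs, abs_neg, mul_one]
  have hdescent : f z' ≤ f z - 2 * |c| ^ 3 / (3 * L₂ ^ 2) :=
    calc f z' = f (z + -η • v) := by rw [hz', neg_smul, sub_eq_add_neg]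
      _ ≤ f z + ⟪f' z, -η • v⟫ + ⟪-η • v, f'' z (-η • v)⟫ / 2 + L₂ * ‖-η • v‖ ^ 3 / 6 :=
        image_add_le_of_hessian_lipschitz hgrad hhess hhesslip z (-η • v)
      _ ≤ f z + 0 + -(2 * |c| / L₂) ^ 2 * |c| / 2 + L₂ * (2 * |c| / L₂) ^ 3 / 6 := by
        rw [hhess_term, hnorm, hη_abs]
        gcongr
      _ = f z - 2 * |c| ^ 3 / (3 * L₂ ^ 2) := by
        field_simp
        ring
  refine ⟨hdescent, ?_⟩
  have hc_abs : α / 2 ≤ |c| := by rw [abs_of_neg hc]; linarith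
  gcongr f z - ?_
  calc α ^ 3 / (12 * L₂ ^ 2) = 2 * (α / 2) ^ 3 / (3 * L₂ ^ 2) := by ring
    _ ≤ 2 * |c| ^ 3 / (3 * L₂ ^ 2) := by gcongr

/-- Progress made by a negative-curvature step: if `⟪v, ∇²f(z) v⟫ ≤ -α/2` for a unit
vector `v` and `z' = z - η v` with `η = (2|⟪v, ∇²f(z)v⟫|/L₂) sign(⟪v, ∇f(z)⟫)`, then
`f z' ≤ f z - 2|⟪v, ∇²f(z)v⟫|³/(3L₂²) ≤ f z - α³/(12 L₂²)`. -/
theorem stmt_7 {d : ℕ} (f : EuclideanSpace ℝ (Fin d) → ℝ)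
    (f' : EuclideanSpace ℝ (Fin d) → EuclideanSpace ℝ (Fin d))
    (f'' : EuclideanSpace ℝ (Fin d) → EuclideanSpace ℝ (Fin d) →L[ℝ] EuclideanSpace ℝ (Fin d))
    (L₂ α : ℝ) (hL₂ : 0 < L₂) (hα : 0 < α)
    (hgrad : ∀ x, HasGradientAt f (f' x) x)
    (hhess : ∀ x, HasFDerivAt f' (f'' x) x)
    (hhesscont : Continuous f'')
    (hhesslip : ∀ x y, ‖f'' x - f'' y‖ ≤ L₂ * ‖x - y‖)
    (z v : EuclideanSpace ℝ (Fin d)) (hv : ‖v‖ = 1)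
    (hcurv : ⟪v, f'' z v⟫ ≤ -α / 2)
    (η : ℝ)
    (hη : η = 2 * |⟪v, f'' z v⟫| / L₂ * (if 0 ≤ ⟪v, f' z⟫ then (1 : ℝ) else -1))
    (z' : EuclideanSpace ℝ (Fin d)) (hz' : z' = z - η • v) :
    f z' ≤ f z - 2 * |⟪v, f'' z v⟫| ^ 3 / (3 * L₂ ^ 2) ∧
      f z - 2 * |⟪v, f'' z v⟫| ^ 3 / (3 * L₂ ^ 2) ≤ f z - α ^ 3 / (12 * L₂ ^ 2) :=
  stmt_7_general f f' f'' L₂ α hL₂ hα hgrad hhess hhesslip z v hv hcurv η hη z' hz'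
end

section
/- Let f have L₂-Lipschitz Hessian and suppose ‖∇f(x₊)‖ ≤ σ²/(16L₂) and ∇²f(x₊) ⪰ σ·I for some σ > 0. Then the function f₊(x) = f(x) + L₁·(max(‖x - x₊‖ - σ/(4L₂), 0))² is (σ/2)-strongly convex. -/
/-!
Put `r = σ / (4 L₂)` and `g z = f₊ z - (σ/4) ‖z - x₊‖²`; the claim is the first-order convexity
inequality for `g`. Along a line, the derivative `t ↦ ⟪∇g (x + t u), u⟫` of `t ↦ g (x + t u)` is
continuous, and away from the at most two parameters where the line crosses the sphere
`‖z - x₊‖ = r` it has derivative `⟪∇²g u, u⟫ ≥ 0`; hence it is monotone and `g` is convex on the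
line.
Writing `ρ = ‖z - x₊‖`, Lipschitz continuity gives `∇²f z ⪰ (σ - L₂ ρ) I` and `∇²f z ⪰ -L₁ I`, while
the Hessian of the penalty vanishes inside the ball and dominates `2 L₁ (1 - r/ρ) I` outside it.
For `ρ ≤ 2r` the first bound alone leaves `σ/2`; for `2r < ρ ≤ 4r` the penalty contributes at
least `L₁ ≥ σ`; beyond `4r` it contributes `3 L₁ / 2`, which beats `-L₁` by `L₁ / 2 ≥ σ / 2`.
-/

open scoped RealInnerProductSpace

open Set Filter Topology Metric Polynomial

section

variable {E : Type*} [NormedAddCommGroup E] [InnerProductSpace ℝ E]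

theorem hasDerivAt_max_zero_sq (s : ℝ) : HasDerivAt (fun s : ℝ => max s 0 ^ 2) (2 * max s 0) s := by
  refine hasDerivAt_of_hasDerivAt_of_ne' (x := 0) (g := fun s => 2 * max s 0) (fun y hy => ?_)
    (by fun_prop) (by fun_prop) s
  rcases hy.lt_or_gt with hy | hy
  · have : (fun s : ℝ => max s 0 ^ 2) =ᶠ[𝓝 y] fun _ => 0 := by
      filter_upwards [Iio_mem_nhds hy] with s hs
      simp [max_eq_right (mem_Iio.mp hs).le]
    simpa [max_eq_right hy.le] using (hasDerivAt_const y (0 : ℝ)).congr_of_eventuallyEq this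
  · have : (fun s : ℝ => max s 0 ^ 2) =ᶠ[𝓝 y] fun s => s ^ 2 := by
      filter_upwards [Ioi_mem_nhds hy] with s hs
      rw [max_eq_left (mem_Ioi.mp hs).le]
    simpa [max_eq_left hy.le, mul_comm] using (hasDerivAt_pow 2 y).congr_of_eventuallyEq this

theorem hasFDerivAt_norm {x : E} (hx : x ≠ 0) :
    HasFDerivAt (fun y : E => ‖y‖) (‖x‖⁻¹ • innerSL ℝ x) x := by
  have h := (hasStrictFDerivAt_norm_sq x).hasFDerivAt.sqrt (by positivity)
  simp only [Real.sqrt_sq (norm_nonneg _)] at h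
  convert h using 1
  ext v
  simp only [smul_apply, coe_innerSL_apply, smul_eq_mul, nsmul_eq_mul, Nat.cast_ofNat]
  field_simp

theorem finite_setOf_add_smul_mem_sphere {u : E} (hu : u ≠ 0) (x c : E) (r : ℝ) :
    {t : ℝ | x + t • u ∈ sphere c r}.Finite := by
  set p : ℝ[X] := C (‖u‖ ^ 2) * X ^ 2 + C (2 * ⟪x - c, u⟫) * X + C (‖x - c‖ ^ 2 - r ^ 2)
  have hp : p ≠ 0 := fun h => by
    have : p.natDegree = 2 := natDegree_quadratic (pow_ne_zero 2 (norm_ne_zero_iff.2 hu))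
    simp [h] at this
  refine (finite_setOfPred_isRoot hp).subset fun t ht => ?_
  rw [mem_ofPred_eq, mem_sphere, dist_eq_norm, show x + t • u - c = (x - c) + t • u by abel] at ht
  simp only [p, mem_ofPred_eq, IsRoot.def, eval_add, eval_mul, eval_pow, eval_C, eval_X, ← ht,
    norm_add_sq_real, inner_smul_right, norm_smul, Real.norm_eq_abs, mul_pow, sq_abs]
  ring

theorem monotoneOn_of_deriv_nonneg_off_finite {D S : Set ℝ} (hD : Convex ℝ D) (hS : S.Finite)
    {f : ℝ → ℝ} (hf : ContinuousOn f D) (hf' : ∀ x ∈ interior D \ S, DifferentiableAt ℝ f x)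
    (hf'₀ : ∀ x ∈ interior D \ S, 0 ≤ deriv f x) : MonotoneOn f D := by
  induction S, hS using Set.Finite.induction_on generalizing D with
  | empty =>
    simp only [sdiff_empty] at hf' hf'₀
    exact monotoneOn_of_deriv_nonneg hD hf (fun x hx => (hf' x hx).differentiableWithinAt) hf'₀
  | @insert c S _ _ ih =>
    by_cases hc : c ∈ D
    · have hsub : ∀ T, c ∉ interior T → interior (D ∩ T) \ S ⊆ interior D \ insert c S := by
        rintro T hT x ⟨hx, hxS⟩
        rw [interior_inter] at hx
        exact ⟨hx.1, by rintro (rfl | h); exacts [hT hx.2, hxS h]⟩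
      have mono_on {T : Set ℝ} (hT : Convex ℝ T) (hcT : c ∉ interior T) : MonotoneOn f (D ∩ T) :=
        ih (hD.inter hT) (hf.mono inter_subset_left) (fun x hx => hf' x (hsub T hcT hx))
          fun x hx => hf'₀ x (hsub T hcT hx)
      have := (mono_on (convex_Iic c) (by simp)).union_right (mono_on (convex_Ici c) (by simp))
        ⟨⟨hc, self_mem_Iic⟩, fun x hx => hx.2⟩ ⟨⟨hc, self_mem_Ici⟩, fun x hx => hx.2⟩
      rwa [← inter_union_distrib_left, Iic_union_Ici, inter_univ] at this
    · have hsub : interior D \ S ⊆ interior D \ insert c S := fun x hx =>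
        ⟨hx.1, by rintro (rfl | h); exacts [hc (interior_subset hx.1), hx.2 h]⟩
      exact ih hD hf (fun x hx => hf' x (hsub hx)) fun x hx => hf'₀ x (hsub hx)

/-- `max (‖w‖ - r) 0` is the distance from `w` to the closed ball of radius `r` about the origin. -/
noncomputable def ballPenalty (r : ℝ) (w : E) : ℝ := max (‖w‖ - r) 0 ^ 2

noncomputable def ballPenaltyGrad (r : ℝ) (w : E) : E := (2 * max (‖w‖ - r) 0 / ‖w‖) • w

theorem hasGradientAt_ballPenalty [CompleteSpace E] {r : ℝ} (hr : 0 < r) (w : E) :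
    HasGradientAt (ballPenalty r) (ballPenaltyGrad r w) w := by
  rw [hasGradientAt_iff_hasFDerivAt]
  rcases eq_or_ne w 0 with rfl | hw
  · have : ballPenalty r =ᶠ[𝓝 (0 : E)] fun _ => 0 := by
      filter_upwards [ball_mem_nhds (0 : E) hr] with v hv
      simp [ballPenalty, (mem_ball_zero_iff.1 hv).le]
    simpa [ballPenaltyGrad] using (hasFDerivAt_const (0 : ℝ) (0 : E)).congr_of_eventuallyEq this
  · refine ((hasDerivAt_max_zero_sq (‖w‖ - r)).comp_hasFDerivAt w
      ((hasFDerivAt_norm hw).sub_const r)).congr_fderiv ?_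
    ext v
    simp only [smul_apply, coe_innerSL_apply, smul_eq_mul, ballPenaltyGrad,
      InnerProductSpace.toDual_apply_apply, real_inner_smul_left]
    field_simp

theorem ballPenaltyGrad_eventuallyEq_zero {r : ℝ} {w : E} (hw : ‖w‖ < r) :
    ballPenaltyGrad r =ᶠ[𝓝 w] 0 := by
  filter_upwards [(isOpen_lt continuous_norm continuous_const).mem_nhds hw] with v hv
  simp [ballPenaltyGrad, max_eq_right (sub_nonpos.2 (le_of_lt hv))]

theorem continuous_ballPenaltyGrad {r : ℝ} (hr : 0 < r) :
    Continuous (ballPenaltyGrad (E := E) r) := by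
  refine continuous_iff_continuousAt.2 fun w => ?_
  rcases lt_or_ge ‖w‖ r with hw | hw
  · exact continuousAt_const.congr (ballPenaltyGrad_eventuallyEq_zero hw).symm
  · have hw0 : ‖w‖ ≠ 0 := (hr.trans_le hw).ne'
    unfold ballPenaltyGrad
    fun_prop (disch := exact hw0)

theorem exists_hasFDerivAt_ballPenaltyGrad {r : ℝ} (hr : 0 ≤ r) {w : E} (hw : r < ‖w‖) :
    ∃ B : E →L[ℝ] E, HasFDerivAt (ballPenaltyGrad r) B w ∧
      ∀ u, 2 * (1 - r / ‖w‖) * ‖u‖ ^ 2 ≤ ⟪B u, u⟫ := by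
  have hw0 : ‖w‖ ≠ 0 := (hr.trans_lt hw).ne'
  have ha : HasDerivAt (fun s : ℝ => 2 * (1 - r / s)) (2 * (r / ‖w‖ ^ 2)) ‖w‖ := by
    simp only [div_eq_mul_inv r]
    exact ((((hasDerivAt_inv hw0).const_mul r).const_sub 1).const_mul 2).congr_deriv (by ring)
  have hB := (ha.comp_hasFDerivAt w (hasFDerivAt_norm (norm_ne_zero_iff.1 hw0))).smul
    (hasFDerivAt_id w)
  refine ⟨_, hB.congr_of_eventuallyEq ?_, fun u => ?_⟩
  · filter_upwards [(isOpen_lt continuous_const continuous_norm).mem_nhds hw] with v hv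
    have hv0 : ‖v‖ ≠ 0 := (hr.trans_lt hv).ne'
    show _ = (2 * (1 - r / ‖v‖)) • v
    simp only [ballPenaltyGrad, max_eq_left (sub_nonneg.2 (le_of_lt hv))]
    congr 1
    field_simp
  · simp only [Function.comp_apply, id_eq, add_apply, smul_apply, ContinuousLinearMap.id_apply,
      ContinuousLinearMap.smulRight_apply, coe_innerSL_apply, smul_eq_mul, inner_add_left,
      real_inner_smul_left, real_inner_self_eq_norm_sq, le_add_iff_nonneg_right]
    have hc : 0 ≤ 2 * (r / ‖w‖ ^ 2) * ‖w‖⁻¹ := by positivity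
    exact (mul_nonneg hc (sq_nonneg ⟪w, u⟫)).trans_eq (by ring)

theorem sub_opNorm_mul_sq_le_inner_apply {A B : E →L[ℝ] E} {σ : ℝ}
    (hB : ∀ v, σ * ‖v‖ ^ 2 ≤ ⟪v, B v⟫) (u : E) : (σ - ‖A - B‖) * ‖u‖ ^ 2 ≤ ⟪A u, u⟫ := by
  have hAB : -(‖A - B‖ * ‖u‖ ^ 2) ≤ ⟪(A - B) u, u⟫ := by
    have := (A - B).le_opNorm u
    nlinarith [neg_abs_le ⟪(A - B) u, u⟫, abs_real_inner_le_norm ((A - B) u) u, norm_nonneg u]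
  rw [sub_apply, inner_sub_left] at hAB
  linarith [hB u, real_inner_comm (B u) u]

theorem add_inner_le_of_hasFDerivAt_inner_nonneg [CompleteSpace E] {g : E → ℝ} {g' : E → E}
    {Z : Set E} (hg : ∀ z, HasGradientAt g (g' z) z) (hg' : Continuous g')
    (hZ : ∀ x u : E, u ≠ 0 → {t : ℝ | x + t • u ∈ Z}.Finite)
    (hH : ∀ z ∉ Z, ∃ A : E →L[ℝ] E, HasFDerivAt g' A z ∧ ∀ u, 0 ≤ ⟪A u, u⟫) (x y : E) :
    g x + ⟪g' x, y - x⟫ ≤ g y := by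
  rcases eq_or_ne y x with rfl | hyx
  · simp
  set u := y - x
  have hline (t : ℝ) : HasDerivAt (fun s : ℝ => x + s • u) u t := by
    simpa using ((hasDerivAt_id t).smul_const u).const_add x
  have hφ (t : ℝ) : HasDerivAt (fun s => g (x + s • u)) ⟪g' (x + t • u), u⟫ t := by
    have h := (hg (x + t • u)).hasFDerivAt.comp_hasDerivAt t (hline t)
    rwa [InnerProductSpace.toDual_apply_apply] at h
  have hχ : Monotone fun t : ℝ => ⟪g' (x + t • u), u⟫ := by
    have hχ' (t : ℝ) (ht : x + t • u ∉ Z) :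
        ∃ d, HasDerivAt (fun s : ℝ => ⟪g' (x + s • u), u⟫) d t ∧ 0 ≤ d := by
      obtain ⟨A, hA, hA₀⟩ := hH _ ht
      exact ⟨_, by simpa using (hA.comp_hasDerivAt t (hline t)).inner ℝ (hasDerivAt_const t u),
        hA₀ u⟩
    rw [← monotoneOn_univ]
    refine monotoneOn_of_deriv_nonneg_off_finite convex_univ (hZ x u (sub_ne_zero.2 hyx))
      (by fun_prop) (fun t ht => ?_) fun t ht => ?_
    · obtain ⟨d, hd, -⟩ := hχ' t ht.2
      exact hd.differentiableAt
    · obtain ⟨d, hd, hd₀⟩ := hχ' t ht.2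
      rwa [hd.deriv]
  have hconv : ConvexOn ℝ univ fun t => g (x + t • u) :=
    Monotone.convexOn_univ_of_deriv (fun t => (hφ t).differentiableAt)
      (by rwa [funext fun t => (hφ t).deriv])
  have := hconv.le_slope_of_hasDerivAt (mem_univ 0) (mem_univ 1) zero_lt_one (hφ 0)
  simp only [zero_smul, add_zero, one_smul, slope_def_field, sub_zero, div_one, u,
    add_sub_cancel] at this
  linarith

theorem half_mul_le_add_penalty_curvature {σ L₁ L₂ r ρ v H : ℝ} (hσL₁ : σ ≤ L₁) (hr : 0 < r)
    (hL₂ : 0 ≤ L₂) (hrL₂ : L₂ * (4 * r) ≤ σ) (hρ : r < ρ) (hv : 0 ≤ v)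
    (h₁ : (σ - L₂ * ρ) * v ≤ H) (h₂ : -(L₁ * v) ≤ H) :
    σ / 2 * v ≤ H + L₁ * (2 * (1 - r / ρ) * v) := by
  have hρ₀ : 0 < ρ := hr.trans hρ
  have hσ : 0 ≤ σ := (by positivity : 0 ≤ L₂ * (4 * r)).trans hrL₂
  have hL₁ : 0 ≤ L₁ := hσ.trans hσL₁
  have hσv : σ * v ≤ L₁ * v := mul_le_mul_of_nonneg_right hσL₁ hv
  have penalty_ge (k : ℝ) (hk : k ≤ 2 * (1 - r / ρ)) : L₁ * (k * v) ≤ L₁ * (2 * (1 - r / ρ) * v) :=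
    mul_le_mul_of_nonneg_left (mul_le_mul_of_nonneg_right hk hv) hL₁
  have hess_ge (k : ℝ) (hk : L₂ * ρ ≤ L₂ * (k * r)) : (σ - L₂ * (k * r)) * v ≤ H :=
    (mul_le_mul_of_nonneg_right (by linarith) hv).trans h₁
  rcases le_or_gt ρ (2 * r) with hρ₂ | hρ₂
  · have := hess_ge 2 (mul_le_mul_of_nonneg_left hρ₂ hL₂)
    have := penalty_ge 0 (by linarith [(div_lt_one hρ₀).2 hρ])
    nlinarith
  have hrρ₂ : r / ρ ≤ 1 / 2 := by rw [div_le_iff₀ hρ₀]; linarith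
  rcases le_or_gt ρ (4 * r) with hρ₄ | hρ₄
  · have := hess_ge 4 (mul_le_mul_of_nonneg_left hρ₄ hL₂)
    have := penalty_ge 1 (by linarith)
    nlinarith
  · have hrρ₄ : r / ρ ≤ 1 / 4 := by rw [div_le_iff₀ hρ₀]; linarith
    have := penalty_ge (3 / 2) (by linarith)
    linarith

theorem exists_hasFDerivAt_add_ballPenaltyGrad_inner_nonneg {f' : E → E} {A B : E →L[ℝ] E} {c z : E}
    {σ L₁ L₂ r : ℝ} (hσL₁ : σ ≤ L₁) (hr : 0 < r) (hL₂ : 0 ≤ L₂) (hrL₂ : L₂ * (4 * r) ≤ σ)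
    (hA : HasFDerivAt f' A z) (hA_norm : ‖A‖ ≤ L₁) (hB : ∀ v, σ * ‖v‖ ^ 2 ≤ ⟪v, B v⟫)
    (hAB : ‖A - B‖ ≤ L₂ * ‖z - c‖) (hz : ‖z - c‖ ≠ r) :
    ∃ D : E →L[ℝ] E,
      HasFDerivAt (fun z => f' z + L₁ • ballPenaltyGrad r (z - c) - (σ / 2) • (z - c)) D z ∧
        ∀ u, 0 ≤ ⟪D u, u⟫ := by
  have hσ : 0 ≤ σ := (by positivity : 0 ≤ L₂ * (4 * r)).trans hrL₂
  have hA₁ (u : E) : (σ - L₂ * ‖z - c‖) * ‖u‖ ^ 2 ≤ ⟪A u, u⟫ :=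
    (mul_le_mul_of_nonneg_right (by linarith) (sq_nonneg _)).trans
      (sub_opNorm_mul_sq_le_inner_apply hB u)
  have hA₂ (u : E) : -(L₁ * ‖u‖ ^ 2) ≤ ⟪A u, u⟫ := by
    have := sub_opNorm_mul_sq_le_inner_apply (A := A) (B := 0) (σ := 0) (by simp) u
    rw [sub_zero, zero_sub] at this
    linarith [mul_le_mul_of_nonneg_right hA_norm (sq_nonneg ‖u‖)]
  have hshift : HasFDerivAt (fun z : E => z - c) (ContinuousLinearMap.id ℝ E) z :=
    (hasFDerivAt_id z).sub_const c
  obtain ⟨P, hP, hPu⟩ : ∃ P : E →L[ℝ] E, HasFDerivAt (ballPenaltyGrad r) P (z - c) ∧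
      ∀ u, σ / 2 * ‖u‖ ^ 2 ≤ ⟪A u, u⟫ + L₁ * ⟪P u, u⟫ := by
    rcases hz.lt_or_gt with hz | hz
    · refine ⟨0, (hasFDerivAt_const 0 _).congr_of_eventuallyEq
        (ballPenaltyGrad_eventuallyEq_zero hz), fun u => ?_⟩
      have : L₂ * ‖z - c‖ ≤ L₂ * r := mul_le_mul_of_nonneg_left hz.le hL₂
      simp only [zero_apply, inner_zero_left, mul_zero, add_zero]
      exact (mul_le_mul_of_nonneg_right (by linarith) (sq_nonneg _)).trans (hA₁ u)
    · obtain ⟨P, hP, hPu⟩ := exists_hasFDerivAt_ballPenaltyGrad hr.le hz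
      refine ⟨P, hP, fun u => ?_⟩
      have := half_mul_le_add_penalty_curvature hσL₁ hr hL₂ hrL₂ hz (sq_nonneg ‖u‖) (hA₁ u) (hA₂ u)
      linarith [mul_le_mul_of_nonneg_left (hPu u) (hσ.trans hσL₁)]
  refine ⟨A + L₁ • P - (σ / 2) • ContinuousLinearMap.id ℝ E,
    (hA.add ((hP.comp z hshift).const_smul L₁)).sub (hshift.const_smul (σ / 2)), fun u => ?_⟩
  simpa [inner_add_left, inner_sub_left, inner_smul_left] using hPu u

theorem hasGradientAt_add_ballPenalty_sub [CompleteSpace E] {f : E → ℝ} {f' : E → E}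
    (hf : ∀ z, HasGradientAt f (f' z) z) {r : ℝ} (hr : 0 < r) (L μ : ℝ) (c z : E) :
    HasGradientAt (fun z => f z + L * ballPenalty r (z - c) - μ / 2 * ‖z - c‖ ^ 2)
      (f' z + L • ballPenaltyGrad r (z - c) - μ • (z - c)) z := by
  have hshift : HasFDerivAt (fun z : E => z - c) (ContinuousLinearMap.id ℝ E) z :=
    (hasFDerivAt_id z).sub_const c
  rw [hasGradientAt_iff_hasFDerivAt]
  refine (((hf z).hasFDerivAt.add
    (((hasGradientAt_ballPenalty hr _).hasFDerivAt.comp z hshift).const_mul L)).sub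
      (hshift.norm_sq.const_mul (μ / 2))).congr_fderiv ?_
  ext v
  simp only [ContinuousLinearMap.comp_id, map_sub, map_add, map_smul, sub_apply, add_apply,
    smul_apply, InnerProductSpace.toDual_apply_apply, smul_eq_mul, coe_innerSL_apply,
    nsmul_eq_mul, Nat.cast_ofNat]
  ring

end

theorem stmt_13_general {d : ℕ} (f : EuclideanSpace ℝ (Fin d) → ℝ)
    (f' : EuclideanSpace ℝ (Fin d) → EuclideanSpace ℝ (Fin d))
    (f'' : EuclideanSpace ℝ (Fin d) → EuclideanSpace ℝ (Fin d) →L[ℝ] EuclideanSpace ℝ (Fin d))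
    (L₁ L₂ σ : ℝ) (hL₂ : 0 < L₂) (hσ : 0 < σ) (hσL₁ : σ ≤ L₁)
    (hgrad : ∀ x, HasGradientAt f (f' x) x)
    (hgradlip : ∀ x y, ‖f' x - f' y‖ ≤ L₁ * ‖x - y‖)
    (hhess : ∀ x, HasFDerivAt f' (f'' x) x)
    (hhesslip : ∀ x y, ‖f'' x - f'' y‖ ≤ L₂ * ‖x - y‖)
    (xp : EuclideanSpace ℝ (Fin d))
    (hpsd : ∀ v, ⟪v, f'' xp v⟫ ≥ σ * ‖v‖ ^ 2)
    (fp : EuclideanSpace ℝ (Fin d) → ℝ)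
    (hfp : ∀ x, fp x = f x + L₁ * max (‖x - xp‖ - σ / (4 * L₂)) 0 ^ 2)
    (fp' : EuclideanSpace ℝ (Fin d) → EuclideanSpace ℝ (Fin d))
    (hfp' : ∀ x, fp' x =
      f' x + (2 * L₁ * max (‖x - xp‖ - σ / (4 * L₂)) 0 / ‖x - xp‖) • (x - xp)) :
    ∀ x y, fp y ≥ fp x + ⟪fp' x, y - x⟫ + σ / 2 / 2 * ‖y - x‖ ^ 2 := by
  set r := σ / (4 * L₂)
  have hr : 0 < r := by positivity
  have hrL₂ : L₂ * (4 * r) ≤ σ := le_of_eq (by simp only [r]; field_simp)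
  have hfp_eq : fp = fun z => f z + L₁ * ballPenalty r (z - xp) := funext hfp
  have hfp'_eq : fp' = fun z => f' z + L₁ • ballPenaltyGrad r (z - xp) := by
    ext1 z
    rw [hfp', ballPenaltyGrad, smul_smul]
    congr 2
    ring
  subst hfp_eq hfp'_eq
  have hf'_cont : Continuous f' := continuous_iff_continuousAt.2 fun z => (hhess z).continuousAt
  have hP_cont := continuous_ballPenaltyGrad (E := EuclideanSpace ℝ (Fin d)) hr
  have hf''_norm (z : EuclideanSpace ℝ (Fin d)) : ‖f'' z‖ ≤ L₁ :=
    (hhess z).le_of_lip' (hσ.le.trans hσL₁) (Eventually.of_forall fun x => hgradlip x z)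
  intro x y
  have key := add_inner_le_of_hasFDerivAt_inner_nonneg
    (hasGradientAt_add_ballPenalty_sub hgrad hr L₁ (σ / 2) xp) (by fun_prop)
    (fun x u hu => finite_setOf_add_smul_mem_sphere hu x xp r)
    (fun z hz => exists_hasFDerivAt_add_ballPenaltyGrad_inner_nonneg hσL₁ hr hL₂.le hrL₂
      (hhess z) (hf''_norm z) hpsd (hhesslip z xp) (by simpa [dist_eq_norm] using hz)) x y
  have hsq : ‖y - xp‖ ^ 2 = ‖x - xp‖ ^ 2 + 2 * ⟪x - xp, y - x⟫ + ‖y - x‖ ^ 2 := by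
    rw [← norm_add_sq_real, sub_add_sub_cancel']
  simp only [inner_add_left, inner_sub_left, real_inner_smul_left, hsq] at key ⊢
  linarith

/-- If `‖∇f x₊‖ ≤ σ²/(16 L₂)` and `∇²f x₊ ⪰ σ I`, then
`f₊ x = f x + L₁ (max (‖x - x₊‖ - σ/(4L₂)) 0)²` is `(σ/2)`-strongly convex. -/
theorem stmt_13 {d : ℕ} (f : EuclideanSpace ℝ (Fin d) → ℝ)
    (f' : EuclideanSpace ℝ (Fin d) → EuclideanSpace ℝ (Fin d))
    (f'' : EuclideanSpace ℝ (Fin d) → EuclideanSpace ℝ (Fin d) →L[ℝ] EuclideanSpace ℝ (Fin d))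
    (L₁ L₂ σ : ℝ) (hL₂ : 0 < L₂) (hσ : 0 < σ) (hσL₁ : σ ≤ L₁)
    (hgrad : ∀ x, HasGradientAt f (f' x) x)
    (hgradlip : ∀ x y, ‖f' x - f' y‖ ≤ L₁ * ‖x - y‖)
    (hhess : ∀ x, HasFDerivAt f' (f'' x) x)
    (hhesscont : Continuous f'')
    (hhesslip : ∀ x y, ‖f'' x - f'' y‖ ≤ L₂ * ‖x - y‖)
    (xp : EuclideanSpace ℝ (Fin d))
    (hgradsmall : ‖f' xp‖ ≤ σ ^ 2 / (16 * L₂))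
    (hpsd : ∀ v, ⟪v, f'' xp v⟫ ≥ σ * ‖v‖ ^ 2)
    (fp : EuclideanSpace ℝ (Fin d) → ℝ)
    (hfp : ∀ x, fp x = f x + L₁ * max (‖x - xp‖ - σ / (4 * L₂)) 0 ^ 2)
    (fp' : EuclideanSpace ℝ (Fin d) → EuclideanSpace ℝ (Fin d))
    (hfp' : ∀ x, fp' x =
      f' x + (2 * L₁ * max (‖x - xp‖ - σ / (4 * L₂)) 0 / ‖x - xp‖) • (x - xp)) :
    ∀ x y, fp y ≥ fp x + ⟪fp' x, y - x⟫ + σ / 2 / 2 * ‖y - x‖ ^ 2 :=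
  stmt_13_general f f' f'' L₁ L₂ σ hL₂ hσ hσL₁ hgrad hgradlip hhess hhesslip xp hpsd fp hfp fp' hfp'
end
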